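/- arXiv:1203.0662 — 2 statements merged into one kernel-verified Lean document; each statement's English description precedes it below -/
import Mathlib

section
/- Let M be a nontrivial cut of G, let H_1 and H_2 be the two connected components of G − M, and let R be a set consisting of all vertices of M together with exactly one endpoint of each edge of M. If R is different from both boundaries T^M_1 and T^M_2 (i.e., the chosen endpoints do not all lie in the same component), then R is a cutset of G, and G − R has exactly two connected components: one containing H_1 \ R and the other containing H_2 \ R. -/
/-!
Each edge of `M` has exactly one endpoint in `R` and `A ⊆ R`, so no edge of `G − R` joins `H₁`
and `H₂`. Both sides keep a vertex outside `R` (otherwise the neighbourhood of a side would be a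
separator of at most two vertices), so `R` separates and triconnectivity forces `|R| = 3`. By this
count `R` meets every edge of `M` in a vertex outside `A` lying on no other edge of `M`, and every
vertex of `R` has a neighbour in every component of `G − R`. Since `R ≠ T₁`, some `b ∈ R` lies in
`H₂`; every component of `G − R` inside `H₁` reaches `b` along an edge of `M`, and `b` lies on only
one such edge, so there is only one such component.
-/

namespace Paper

variable {V : Type*}

/-- `S ⊆ V(G)` is a cutset of `G`: the graph `G − S` is disconnected. -/
def IsCutset (G : SimpleGraph V) (S : Set V) : Prop :=
  ¬ (G.induce (Sᶜ : Set V)).Connected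

/-- A 3-cutset: a cutset of exactly 3 vertices. -/
def IsThreeCutset (G : SimpleGraph V) (S : Set V) : Prop :=
  S.ncard = 3 ∧ IsCutset G S

/-- `G` is triconnected: at least 4 vertices and deleting any at most 2 vertices
leaves a connected graph. -/
def IsTriconnected [Fintype V] (G : SimpleGraph V) : Prop :=
  4 ≤ Fintype.card V ∧
    ∀ X : Set V, X.ncard ≤ 2 → (G.induce (Xᶜ : Set V)).Connected

/-- `x` and `y` both survive the deletion of `R` and lie in the same connected
component of `G − R`. -/
def ReachOutside (G : SimpleGraph V) (R : Set V) (x y : V) : Prop :=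
  ∃ (hx : x ∈ (Rᶜ : Set V)) (hy : y ∈ (Rᶜ : Set V)),
    (G.induce (Rᶜ : Set V)).Reachable ⟨x, hx⟩ ⟨y, hy⟩

/-- `R` splits `X`: two vertices of `X \ R` lie in different connected components
of `G − R`. -/
def Splits (G : SimpleGraph V) (R X : Set V) : Prop :=
  ∃ x ∈ X, ∃ y ∈ X, x ∉ R ∧ y ∉ R ∧ ¬ ReachOutside G R x y

/-- Two 3-cutsets are dependent iff one splits the other. -/
def Dependent (G : SimpleGraph V) (S T : Set V) : Prop :=
  Splits G S T ∨ Splits G T S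

/-- The connected component of `G − R` containing `u` (empty if `u ∈ R`). -/
def compOutside (G : SimpleGraph V) (R : Set V) (u : V) : Set V :=
  {y | ReachOutside G R u y}

/-- `C` is a connected component of `G − R`. -/
def IsCompOutside (G : SimpleGraph V) (R : Set V) (C : Set V) : Prop :=
  ∃ u, u ∉ R ∧ C = compOutside G R u

/-- The graph obtained from `G` by deleting the vertices of `A` (with all incident
edges) and the edges of `E`. -/
def DelVE (G : SimpleGraph V) (A : Set V) (E : Set (Sym2 V)) : SimpleGraph (Aᶜ : Set V) :=
  (G.deleteEdges E).induce (Aᶜ : Set V)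

/-- The mixed set of vertices `A` and edges `E` disconnects `G`. -/
def CutVE (G : SimpleGraph V) (A : Set V) (E : Set (Sym2 V)) : Prop :=
  ¬ (DelVE G A E).Connected

/-- `x` and `y` survive the deletion and lie in the same connected component of
the graph obtained by deleting the vertices of `A` and the edges of `E`. -/
def ReachVE (G : SimpleGraph V) (A : Set V) (E : Set (Sym2 V)) (x y : V) : Prop :=
  ∃ (hx : x ∈ (Aᶜ : Set V)) (hy : y ∈ (Aᶜ : Set V)),
    (DelVE G A E).Reachable ⟨x, hx⟩ ⟨y, hy⟩

/-- The connected component of `G − (A ∪ E)` containing `u`. -/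
def compVE (G : SimpleGraph V) (A : Set V) (E : Set (Sym2 V)) (u : V) : Set V :=
  {y | ReachVE G A E u y}

/-- `C` is a connected component of the graph obtained from `G` by deleting the
vertices of `A` and the edges of `E`. -/
def IsCompVE (G : SimpleGraph V) (A : Set V) (E : Set (Sym2 V)) (C : Set V) : Prop :=
  ∃ u, u ∉ A ∧ C = compVE G A E u

section ReachOutside

variable {G : SimpleGraph V} {R : Set V} {u x y z : V}

theorem ReachOutside.notMem_right (h : ReachOutside G R x y) : y ∉ R := h.2.1

theorem ReachOutside.refl (hx : x ∉ R) : ReachOutside G R x x := ⟨hx, hx, .rfl⟩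

theorem ReachOutside.symm (h : ReachOutside G R x y) : ReachOutside G R y x :=
  let ⟨hx, hy, h⟩ := h
  ⟨hy, hx, h.symm⟩

theorem ReachOutside.trans (h : ReachOutside G R x y) (h' : ReachOutside G R y z) :
    ReachOutside G R x z :=
  let ⟨hx, _, h⟩ := h
  let ⟨_, hz, h'⟩ := h'
  ⟨hx, hz, h.trans h'⟩

theorem reachOutside_of_adj (hx : x ∉ R) (hy : y ∉ R) (h : G.Adj x y) : ReachOutside G R x y :=
  ⟨hx, hy, SimpleGraph.Adj.reachable (G := G.induce Rᶜ) h⟩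

theorem ReachOutside.mem_of_closed {P : Set V}
    (hP : ∀ a ∉ R, ∀ b ∉ R, G.Adj a b → a ∈ P → b ∈ P) (hx : x ∈ P)
    (h : ReachOutside G R x y) : y ∈ P := by
  obtain ⟨hx', hy', h⟩ := h
  suffices ∀ b : (Rᶜ : Set V), (G.induce Rᶜ).Reachable ⟨x, hx'⟩ b → (b : V) ∈ P from this _ h
  intro b hb
  rw [SimpleGraph.reachable_iff_reflTransGen] at hb
  induction hb with
  | refl => exact hx
  | @tail a b _ hab ih => exact hP a a.2 b b.2 hab ih

theorem self_mem_compOutside (hu : u ∉ R) : u ∈ compOutside G R u := ReachOutside.refl hu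

theorem compOutside_eq_of_reachOutside {u' : V} (h : ReachOutside G R u u') :
    compOutside G R u = compOutside G R u' :=
  Set.ext fun _ => ⟨h.symm.trans, h.trans⟩

theorem disjoint_compOutside_of_ne {u' : V} (hne : compOutside G R u ≠ compOutside G R u') :
    Disjoint (compOutside G R u) (compOutside G R u') :=
  Set.disjoint_left.2 fun _ hx hx' =>
    hne (compOutside_eq_of_reachOutside (ReachOutside.trans hx (ReachOutside.symm hx')))

theorem IsTriconnected.reachOutside [Fintype V] (htri : IsTriconnected G) (hR : R.ncard ≤ 2)
    (hx : x ∉ R) (hy : y ∉ R) : ReachOutside G R x y :=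
  ⟨hx, hy, (htri.2 R hR).preconnected _ _⟩

theorem IsTriconnected.two_lt_ncard_of_not_reachOutside [Fintype V] (htri : IsTriconnected G)
    (hx : x ∉ R) (hy : y ∉ R) (hxy : ¬ ReachOutside G R x y) : 2 < R.ncard := by
  by_contra! hR
  exact hxy (htri.reachOutside hR hx hy)

theorem IsTriconnected.two_lt_ncard [Fintype V] (htri : IsTriconnected G) {N Q : Set V}
    (hQ : ∀ a ∈ Q, ∀ b, G.Adj a b → b ∈ Q ∨ b ∈ N) (hQN : Disjoint Q N) {q w : V}
    (hq : q ∈ Q) (hw : w ∉ Q ∪ N) : 2 < N.ncard := by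
  by_contra! hN
  have hqw : ReachOutside G N q w :=
    htri.reachOutside hN (Set.disjoint_left.1 hQN hq) fun h => hw (Or.inr h)
  refine hw (Or.inl (hqw.mem_of_closed (fun a _ b hb hab ha => ?_) hq))
  exact (hQ a ha b hab).resolve_right hb

theorem IsTriconnected.exists_reachOutside_adj [Fintype V] (htri : IsTriconnected G)
    (hR : R.ncard ≤ 3) (hy : y ∈ R) {p q : V} (hp : p ∉ R) (hq : q ∉ R)
    (hpq : ¬ ReachOutside G R p q) : ∃ k, ReachOutside G R p k ∧ G.Adj k y := by
  by_contra! hno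
  have hN : (R \ {y}).ncard ≤ 2 := by
    rw [Set.ncard_sdiff_singleton_of_mem hy]
    omega
  refine hN.not_gt (htri.two_lt_ncard (Q := compOutside G R p) (w := q) ?_ ?_
    (self_mem_compOutside hp) ?_)
  · intro a ha b hab
    by_cases hb : b ∈ R
    · exact Or.inr ⟨hb, fun hby => hno a ha (hby ▸ hab)⟩
    · exact Or.inl (ReachOutside.trans ha (reachOutside_of_adj (ReachOutside.notMem_right ha) hb hab))
  · exact Set.disjoint_left.2 fun a ha haN => ReachOutside.notMem_right ha haN.1
  · rintro (h | h)
    · exact hpq h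
    · exact hq h.1

end ReachOutside

section EdgeCount

variable {S : Set V} {F : Set (Sym2 V)}

theorem exists_injOn_mem_of_forall_exists_mem (hcover : ∀ v ∈ S, ∃ e ∈ F, v ∈ e)
    (hsep : ∀ e ∈ F, ∀ v ∈ S, ∀ w ∈ S, v ∈ e → w ∈ e → v = w) :
    ∃ f : V → Sym2 V, Set.MapsTo f S F ∧ Set.InjOn f S ∧ ∀ v ∈ S, v ∈ f v := by
  have hchoice : ∀ v, ∃ e : Sym2 V, v ∈ S → e ∈ F ∧ v ∈ e := by
    intro v
    by_cases hv : v ∈ S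
    · obtain ⟨e, he, hve⟩ := hcover v hv
      exact ⟨e, fun _ => ⟨he, hve⟩⟩
    · exact ⟨s(v, v), fun h => absurd h hv⟩
  choose f hf using hchoice
  refine ⟨f, fun v hv => (hf v hv).1, fun v hv w hw hvw => ?_, fun v hv => (hf v hv).2⟩
  exact hsep _ (hf v hv).1 v hv w hw (hf v hv).2 (hvw ▸ (hf w hw).2)

theorem ncard_le_ncard_of_forall_exists_mem [Finite V] (hcover : ∀ v ∈ S, ∃ e ∈ F, v ∈ e)
    (hsep : ∀ e ∈ F, ∀ v ∈ S, ∀ w ∈ S, v ∈ e → w ∈ e → v = w) : S.ncard ≤ F.ncard := by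
  obtain ⟨f, hfF, hinj, -⟩ := exists_injOn_mem_of_forall_exists_mem hcover hsep
  exact Set.ncard_le_ncard_of_injOn f hfF hinj

theorem exists_bijOn_mem_of_ncard_le [Finite V] (hcover : ∀ v ∈ S, ∃ e ∈ F, v ∈ e)
    (hsep : ∀ e ∈ F, ∀ v ∈ S, ∀ w ∈ S, v ∈ e → w ∈ e → v = w) (hcard : F.ncard ≤ S.ncard) :
    ∃ f : V → Sym2 V, Set.BijOn f S F ∧ ∀ v ∈ S, v ∈ f v := by
  obtain ⟨f, hfF, hinj, hf⟩ := exists_injOn_mem_of_forall_exists_mem hcover hsep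
  have himage : f '' S = F :=
    Set.eq_of_subset_of_ncard_le hfF.image_subset (by rwa [hinj.ncard_image])
  exact ⟨f, ⟨hfF, hinj, himage.ge⟩, hf⟩

end EdgeCount

structure IsTransversal (A : Set V) (E : Set (Sym2 V)) (R : Set V) : Prop where
  subset : A ⊆ R
  subset_union : R ⊆ A ∪ {v | ∃ e ∈ E, v ∈ e}
  mem_iff_notMem : ∀ e ∈ E, ∀ v w : V, e = s(v, w) → (v ∈ R ↔ w ∉ R)

namespace IsTransversal

variable {A R : Set V} {E : Set (Sym2 V)} {e e' : Sym2 V} {v w : V}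

theorem mem_of_notMem (hR : IsTransversal A E R) (he : s(v, w) ∈ E) (hv : v ∉ R) : w ∈ R := by
  by_contra hw
  exact hv ((hR.mem_iff_notMem _ he v w rfl).2 hw)

theorem eq_of_mem (hR : IsTransversal A E R) (he : e ∈ E) (hv : v ∈ e) (hw : w ∈ e)
    (hvR : v ∈ R) (hwR : w ∈ R) : v = w := by
  by_contra hvw
  exact (hR.mem_iff_notMem e he v w ((Sym2.mem_and_mem_iff hvw).1 ⟨hv, hw⟩)).1 hvR hwR

theorem eq_of_notMem (hR : IsTransversal A E R) (he : e ∈ E) (hv : v ∈ e) (hw : w ∈ e)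
    (hvR : v ∉ R) (hwR : w ∉ R) : v = w := by
  by_contra hvw
  exact hvR ((hR.mem_iff_notMem e he v w ((Sym2.mem_and_mem_iff hvw).1 ⟨hv, hw⟩)).2 hwR)

theorem exists_mem_of_mem_sdiff (hR : IsTransversal A E R) (hv : v ∈ R \ A) : ∃ e ∈ E, v ∈ e :=
  (hR.subset_union hv.1).resolve_left hv.2

theorem ncard_le [Finite V] (hR : IsTransversal A E R) : R.ncard ≤ A.ncard + E.ncard := by
  have hRA : (R \ A).ncard ≤ E.ncard :=
    ncard_le_ncard_of_forall_exists_mem (fun _ => hR.exists_mem_of_mem_sdiff)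
      fun e he _ hv _ hw hve hwe => hR.eq_of_mem he hve hwe hv.1 hw.1
  have := Set.ncard_le_ncard_sdiff_add_ncard R A
  omega

theorem exists_bijOn_of_ncard_le [Finite V] (hR : IsTransversal A E R)
    (hcard : A.ncard + E.ncard ≤ R.ncard) :
    ∃ f : V → Sym2 V, Set.BijOn f (R \ A) E ∧ ∀ v ∈ R \ A, v ∈ f v := by
  refine exists_bijOn_mem_of_ncard_le (fun _ => hR.exists_mem_of_mem_sdiff)
    (fun e he _ hv _ hw hve hwe => hR.eq_of_mem he hve hwe hv.1 hw.1) ?_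
  have := Set.ncard_sdiff_add_ncard_of_subset hR.subset
  omega

theorem notMem_of_ncard_le [Finite V] (hR : IsTransversal A E R)
    (hcard : A.ncard + E.ncard ≤ R.ncard) (he : e ∈ E) (hv : v ∈ e) (hvR : v ∈ R) : v ∉ A := by
  obtain ⟨f, hf, hmem⟩ := hR.exists_bijOn_of_ncard_le hcard
  obtain ⟨w, hw, rfl⟩ := hf.surjOn he
  exact hR.eq_of_mem (hf.mapsTo hw) (hmem w hw) hv hw.1 hvR ▸ hw.2

theorem eq_of_ncard_le [Finite V] (hR : IsTransversal A E R)
    (hcard : A.ncard + E.ncard ≤ R.ncard) (he : e ∈ E) (he' : e' ∈ E) (hvR : v ∈ R)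
    (hv : v ∈ e) (hv' : v ∈ e') : e = e' := by
  obtain ⟨f, hf, hmem⟩ := hR.exists_bijOn_of_ncard_le hcard
  obtain ⟨w, hw, rfl⟩ := hf.surjOn he
  obtain ⟨w', hw', rfl⟩ := hf.surjOn he'
  rw [hR.eq_of_mem (hf.mapsTo hw) (hmem w hw) hv hw.1 hvR,
    hR.eq_of_mem (hf.mapsTo hw') (hmem w' hw') hv' hw'.1 hvR]

end IsTransversal

def boundary (A : Set V) (E : Set (Sym2 V)) (H : Set V) : Set V :=
  A ∪ {v ∈ H | ∃ e ∈ E, v ∈ e}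

structure IsSeparation (G : SimpleGraph V) (A : Set V) (E : Set (Sym2 V)) (H₁ H₂ : Set V) :
    Prop where
  disjoint : Disjoint H₁ H₂
  disjoint_left : Disjoint H₁ A
  disjoint_right : Disjoint H₂ A
  mem_union : ∀ v ∉ A, v ∈ H₁ ∪ H₂
  nonempty_left : H₁.Nonempty
  nonempty_right : H₂.Nonempty
  mem_of_adj : ∀ x ∈ H₁, ∀ y ∈ H₂, G.Adj x y → s(x, y) ∈ E

namespace IsSeparation

variable {G : SimpleGraph V} {A R H₁ H₂ : Set V} {E : Set (Sym2 V)} {x y p₁ p₂ : V}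

theorem symm (hS : IsSeparation G A E H₁ H₂) : IsSeparation G A E H₂ H₁ where
  disjoint := hS.disjoint.symm
  disjoint_left := hS.disjoint_right
  disjoint_right := hS.disjoint_left
  mem_union v hv := (hS.mem_union v hv).symm
  nonempty_left := hS.nonempty_right
  nonempty_right := hS.nonempty_left
  mem_of_adj x hx y hy hxy := Sym2.eq_swap ▸ hS.mem_of_adj y hy x hx hxy.symm

theorem of_isCompVE (hH₁ : IsCompVE G A E H₁) (hH₂ : IsCompVE G A E H₂) (hne : H₁ ≠ H₂)
    (hcover : ∀ v, v ∉ A → v ∈ H₁ ∪ H₂) : IsSeparation G A E H₁ H₂ := by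
  obtain ⟨u₁, hu₁, rfl⟩ := hH₁
  obtain ⟨u₂, hu₂, rfl⟩ := hH₂
  -- `compVE G A E` unfolds to `compOutside (G.deleteEdges E) A`.
  change compOutside (G.deleteEdges E) A u₁ ≠ compOutside (G.deleteEdges E) A u₂ at hne
  have hdisj := disjoint_compOutside_of_ne hne
  refine ⟨hdisj, ?_, ?_, hcover, ⟨u₁, self_mem_compOutside hu₁⟩,
    ⟨u₂, self_mem_compOutside hu₂⟩, fun x hx y hy hxy => ?_⟩
  · exact Set.disjoint_left.2 fun _ hx => ReachOutside.notMem_right hx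
  · exact Set.disjoint_left.2 fun _ hx => ReachOutside.notMem_right hx
  · by_contra hxyE
    have hxy' : (G.deleteEdges E).Adj x y := SimpleGraph.deleteEdges_adj.2 ⟨hxy, hxyE⟩
    exact Set.disjoint_left.1 hdisj (ReachOutside.trans hx
      (reachOutside_of_adj (ReachOutside.notMem_right hx) (ReachOutside.notMem_right hy) hxy'))
      hy

theorem mem_of_reachOutside (hS : IsSeparation G A E H₁ H₂) (hR : IsTransversal A E R)
    (hx : x ∈ H₁) (h : ReachOutside G R x y) : y ∈ H₁ := by
  refine h.mem_of_closed (fun a ha b hb hab haH => ?_) hx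
  refine (hS.mem_union b fun hbA => hb (hR.subset hbA)).resolve_right fun hbH => hb ?_
  exact hR.mem_of_notMem (hS.mem_of_adj a haH b hbH hab) ha

theorem not_reachOutside (hS : IsSeparation G A E H₁ H₂) (hR : IsTransversal A E R)
    (hx : x ∈ H₁) (hy : y ∈ H₂) : ¬ ReachOutside G R x y :=
  fun h => Set.disjoint_left.1 hS.disjoint (hS.mem_of_reachOutside hR hx h) hy

theorem mem_or_mem_of_adj (hS : IsSeparation G A E H₁ H₂) (hR : IsTransversal A E R)
    (hH₁R : H₁ ⊆ R) {r a b : V} {er : Sym2 V} (hrR : r ∈ R) (hrH₁ : r ∉ H₁) (hrer : r ∈ er)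
    (ha : a ∈ H₁) (hab : G.Adj a b) :
    b ∈ H₁ ∨ b ∈ A ∪ {v | v ∉ R ∧ ∃ e ∈ E \ {er}, v ∈ e} := by
  by_cases hb : b ∈ H₁
  · exact Or.inl hb
  refine Or.inr ((em (b ∈ A)).imp_right fun hbA => ?_)
  have habE := hS.mem_of_adj a ha b ((hS.mem_union b hbA).resolve_left hb) hab
  refine ⟨(hR.mem_iff_notMem _ habE a b rfl).1 (hH₁R ha), s(a, b), ⟨habE, fun h => ?_⟩,
    Sym2.mem_mk_right a b⟩
  have har : a = r := hR.eq_of_mem habE (Sym2.mem_mk_left a b)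
    ((Set.mem_singleton_iff.1 h).symm ▸ hrer) (hH₁R ha) hrR
  exact hrH₁ (har ▸ ha)

theorem exists_mem_notMem [Fintype V] (hS : IsSeparation G A E H₁ H₂)
    (htri : IsTriconnected G) (hbig : 6 < Fintype.card V) (hR : IsTransversal A E R)
    (hcard : A.ncard + E.ncard ≤ 3) (hR₁ : R ≠ boundary A E H₁) : ∃ p ∈ H₁, p ∉ R := by
  by_contra! hH₁R
  obtain ⟨r, hrR, hr⟩ : ∃ r ∈ R, r ∉ boundary A E H₁ := by
    by_contra! h
    exact hR₁ (Set.Subset.antisymm h (Set.union_subset hR.subset fun v hv => hH₁R v hv.1))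
  obtain ⟨er, her, hrer⟩ := hR.exists_mem_of_mem_sdiff ⟨hrR, fun h => hr (Or.inl h)⟩
  have hrH₁ : r ∉ H₁ := fun h => hr (Or.inr ⟨h, er, her, hrer⟩)
  set S := {v | v ∉ R ∧ ∃ e ∈ E \ {er}, v ∈ e}
  have hSle : S.ncard ≤ E.ncard - 1 := by
    rw [← Set.ncard_sdiff_singleton_of_mem her]
    exact ncard_le_ncard_of_forall_exists_mem (fun v hv => hv.2)
      fun e he v hv w hw hve hwe => hR.eq_of_notMem he.1 hve hwe hv.1 hw.1
  have hEpos : 0 < E.ncard := (Set.ncard_pos (Set.toFinite E)).2 ⟨er, her⟩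
  have hR3 : R.ncard ≤ 3 := hR.ncard_le.trans hcard
  obtain ⟨w, hw⟩ : ∃ w, w ∉ H₁ ∪ (A ∪ S) := by
    by_contra! h
    have : Fintype.card V ≤ 5 := calc
      Fintype.card V = (H₁ ∪ (A ∪ S)).ncard := by
        rw [Set.eq_univ_of_forall h, Set.ncard_univ, Nat.card_eq_fintype_card]
      _ ≤ R.ncard + (A.ncard + S.ncard) :=
        (Set.ncard_union_le _ _).trans
          (add_le_add (Set.ncard_le_ncard hH₁R) (Set.ncard_union_le _ _))
      _ ≤ 5 := by omega
    omega
  have hdisj : Disjoint H₁ (A ∪ S) := Set.disjoint_union_right.2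
    ⟨hS.disjoint_left, Set.disjoint_left.2 fun v hv hvS => hvS.1 (hH₁R v hv)⟩
  refine (htri.two_lt_ncard (fun a ha b hab => hS.mem_or_mem_of_adj hR hH₁R hrR hrH₁ hrer ha hab)
    hdisj hS.nonempty_left.some_mem hw).not_ge ?_
  calc (A ∪ S).ncard ≤ A.ncard + S.ncard := Set.ncard_union_le _ _
    _ ≤ 2 := by omega

theorem exists_mem_right_mem [Fintype V] (hS : IsSeparation G A E H₁ H₂)
    (htri : IsTriconnected G) (hR : IsTransversal A E R) (hR3 : R.ncard ≤ 3)
    (hcard : A.ncard + E.ncard ≤ R.ncard) (hp₁ : p₁ ∈ H₁) (hp₁R : p₁ ∉ R) (hp₂ : p₂ ∈ H₂)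
    (hp₂R : p₂ ∉ R) (hR₁ : R ≠ boundary A E H₁) : ∃ b ∈ H₂, b ∈ R := by
  by_contra! hno
  obtain ⟨x, hx, hxR⟩ : ∃ x ∈ boundary A E H₁, x ∉ R := by
    by_contra! h
    refine hR₁ (Set.Subset.antisymm (fun r hr => ?_) h)
    by_cases hrA : r ∈ A
    · exact Or.inl hrA
    · exact Or.inr ⟨(hS.mem_union r hrA).resolve_right fun h => hno r h hr,
        hR.exists_mem_of_mem_sdiff ⟨hr, hrA⟩⟩
  obtain ⟨hxH₁, f, hf, hxf⟩ := hx.resolve_left fun h => hxR (hR.subset h)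
  obtain ⟨y, rfl⟩ := Sym2.mem_iff_exists.1 hxf
  have hyR : y ∈ R := hR.mem_of_notMem hf hxR
  have hyH₁ : y ∈ H₁ :=
    (hS.mem_union y (hR.notMem_of_ncard_le hcard hf (Sym2.mem_mk_right x y) hyR)).resolve_right
      fun h => hno y h hyR
  -- The component of `p₂` reaches `y` by an edge of `E` other than `s(x, y)`, but `y ∈ R` lies
  -- on only one edge of `E`.
  obtain ⟨l, hl, hly⟩ :=
    htri.exists_reachOutside_adj hR3 hyR hp₂R hp₁R (hS.symm.not_reachOutside hR hp₂ hp₁)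
  have hlH₂ := hS.symm.mem_of_reachOutside hR hp₂ hl
  have heq := hR.eq_of_ncard_le hcard (hS.mem_of_adj y hyH₁ l hlH₂ hly.symm) hf hyR
    (Sym2.mem_mk_left y l) (Sym2.mem_mk_right x y)
  rcases Sym2.mem_iff.1 (heq ▸ Sym2.mem_mk_right y l) with rfl | rfl
  · exact Set.disjoint_left.1 hS.disjoint hxH₁ hlH₂
  · exact hl.notMem_right hyR

theorem reachOutside_of_mem_left [Fintype V] (hS : IsSeparation G A E H₁ H₂)
    (htri : IsTriconnected G) (hR : IsTransversal A E R) (hR3 : R.ncard ≤ 3)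
    (hcard : A.ncard + E.ncard ≤ R.ncard) (hp₁ : p₁ ∈ H₁) (hp₁R : p₁ ∉ R) (hp₂ : p₂ ∈ H₂)
    (hp₂R : p₂ ∉ R) (hR₁ : R ≠ boundary A E H₁) {v : V} (hv : v ∈ H₁) (hvR : v ∉ R) :
    ReachOutside G R p₁ v := by
  obtain ⟨b, hb, hbR⟩ := hS.exists_mem_right_mem htri hR hR3 hcard hp₁ hp₁R hp₂ hp₂R hR₁
  -- Both components reach `b ∈ H₂` by an edge of `E`, and `b ∈ R` lies on only one such edge.
  obtain ⟨k, hk, hkb⟩ :=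
    htri.exists_reachOutside_adj hR3 hbR hp₁R hp₂R (hS.not_reachOutside hR hp₁ hp₂)
  obtain ⟨k', hk', hk'b⟩ :=
    htri.exists_reachOutside_adj hR3 hbR hvR hp₂R (hS.not_reachOutside hR hv hp₂)
  have heq : s(k, b) = s(k', b) := hR.eq_of_ncard_le hcard
    (hS.mem_of_adj k (hS.mem_of_reachOutside hR hp₁ hk) b hb hkb)
    (hS.mem_of_adj k' (hS.mem_of_reachOutside hR hv hk') b hb hk'b) hbR
    (Sym2.mem_mk_right k b) (Sym2.mem_mk_right k' b)
  rcases Sym2.mem_iff.1 (heq ▸ Sym2.mem_mk_left k b) with rfl | rfl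
  · exact hk.trans hk'.symm
  · exact absurd hbR hk.notMem_right

end IsSeparation

theorem stmt_11_general [Fintype V] (G : SimpleGraph V)
    (htri : IsTriconnected G) (hbig : 6 < Fintype.card V)
    (A : Set V) (E : Set (Sym2 V))
    (hcard : A.ncard + E.ncard = 3)
    (H₁ H₂ : Set V) (hH₁ : IsCompVE G A E H₁) (hH₂ : IsCompVE G A E H₂)
    (hHne : H₁ ≠ H₂) (hcover : ∀ v, v ∉ A → v ∈ H₁ ∪ H₂)
    (R : Set V) (hAR : A ⊆ R)
    (hRsub : R ⊆ A ∪ {v | ∃ e ∈ E, v ∈ e})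
    (hone : ∀ e ∈ E, ∀ v w : V, e = s(v, w) → (v ∈ R ↔ w ∉ R))
    (hR₁ : R ≠ A ∪ {v ∈ H₁ | ∃ e ∈ E, v ∈ e})
    (hR₂ : R ≠ A ∪ {v ∈ H₂ | ∃ e ∈ E, v ∈ e}) :
    IsCutset G R ∧
      ∃ C₁ C₂ : Set V, IsCompOutside G R C₁ ∧ IsCompOutside G R C₂ ∧ C₁ ≠ C₂ ∧
        (∀ v, v ∉ R → v ∈ C₁ ∪ C₂) ∧ H₁ \ R ⊆ C₁ ∧ H₂ \ R ⊆ C₂ := by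
  have hS := IsSeparation.of_isCompVE hH₁ hH₂ hHne hcover
  have hR : IsTransversal A E R := ⟨hAR, hRsub, hone⟩
  have hR3 : R.ncard ≤ 3 := hcard ▸ hR.ncard_le
  obtain ⟨p₁, hp₁, hp₁R⟩ := hS.exists_mem_notMem htri hbig hR hcard.le hR₁
  obtain ⟨p₂, hp₂, hp₂R⟩ := hS.symm.exists_mem_notMem htri hbig hR hcard.le hR₂
  have hsplit : ¬ ReachOutside G R p₁ p₂ := hS.not_reachOutside hR hp₁ hp₂
  have hfull : A.ncard + E.ncard ≤ R.ncard := by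
    have := htri.two_lt_ncard_of_not_reachOutside hp₁R hp₂R hsplit
    omega
  have hreach₁ : ∀ v ∈ H₁, v ∉ R → v ∈ compOutside G R p₁ := fun v hv hvR =>
    hS.reachOutside_of_mem_left htri hR hR3 hfull hp₁ hp₁R hp₂ hp₂R hR₁ hv hvR
  have hreach₂ : ∀ v ∈ H₂, v ∉ R → v ∈ compOutside G R p₂ := fun v hv hvR =>
    hS.symm.reachOutside_of_mem_left htri hR hR3 hfull hp₂ hp₂R hp₁ hp₁R hR₂ hv hvR
  refine ⟨fun hconn => hsplit ⟨hp₁R, hp₂R, hconn.preconnected _ _⟩, _, _, ⟨p₁, hp₁R, rfl⟩,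
    ⟨p₂, hp₂R, rfl⟩, fun heq =>
    hsplit (show p₂ ∈ compOutside G R p₁ from heq ▸ self_mem_compOutside hp₂R), fun v hvR => ?_,
    fun v hv => hreach₁ v hv.1 hv.2, fun v hv => hreach₂ v hv.1 hv.2⟩
  exact (hS.mem_union v fun hvA => hvR (hAR hvA)).imp (hreach₁ v · hvR) (hreach₂ v · hvR)

/-- Lemma `l30`(1): an inner set of a nontrivial cut is a cutset splitting `G`
into exactly two parts, one containing `H₁ \ R` and the other `H₂ \ R`. -/
theorem stmt_11 [Fintype V] (G : SimpleGraph V)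
    (htri : IsTriconnected G) (hbig : 6 < Fintype.card V)
    (A : Set V) (E : Set (Sym2 V))
    (hcard : A.ncard + E.ncard = 3) (hEsub : E ⊆ G.edgeSet)
    (hEne : E.Nonempty) (hcut : CutVE G A E)
    (H₁ H₂ : Set V) (hH₁ : IsCompVE G A E H₁) (hH₂ : IsCompVE G A E H₂)
    (hHne : H₁ ≠ H₂) (hcover : ∀ v, v ∉ A → v ∈ H₁ ∪ H₂)
    (hnt₁ : ∀ v : V, H₁ ≠ {v}) (hnt₂ : ∀ v : V, H₂ ≠ {v})
    (R : Set V) (hAR : A ⊆ R)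
    (hRsub : R ⊆ A ∪ {v | ∃ e ∈ E, v ∈ e})
    (hone : ∀ e ∈ E, ∀ v w : V, e = s(v, w) → (v ∈ R ↔ w ∉ R))
    (hR₁ : R ≠ A ∪ {v ∈ H₁ | ∃ e ∈ E, v ∈ e})
    (hR₂ : R ≠ A ∪ {v ∈ H₂ | ∃ e ∈ E, v ∈ e}) :
    IsCutset G R ∧
      ∃ C₁ C₂ : Set V, IsCompOutside G R C₁ ∧ IsCompOutside G R C₂ ∧ C₁ ≠ C₂ ∧
        (∀ v, v ∉ R → v ∈ C₁ ∪ C₂) ∧ H₁ \ R ⊆ C₁ ∧ H₂ \ R ⊆ C₂ :=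
  stmt_11_general G htri hbig A E hcard H₁ H₂ hH₁ hH₂ hHne hcover R hAR hRsub hone hR₁ hR₂

end Paper
end

section
/- Let M be a nontrivial cut of G, let H_1 and H_2 be the two connected components of G − M, and suppose H_2 contains a vertex that is not an endpoint of any edge of M. Then the boundary T^M_2 is a cutset of G, and H_1 is a connected component of the graph G − T^M_2. -/
namespace Paper

variable {V : Type*}

lemma reachVE_refl {G : SimpleGraph V} {A : Set V} {E : Set (Sym2 V)} {u : V}
    (h : u ∉ A) : ReachVE G A E u u :=
  ⟨h, h, SimpleGraph.Reachable.refl _⟩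

lemma reachVE_symm {G : SimpleGraph V} {A : Set V} {E : Set (Sym2 V)} {u v : V}
    (h : ReachVE G A E u v) : ReachVE G A E v u := by
  obtain ⟨h1, h2, hr⟩ := h
  exact ⟨h2, h1, hr.symm⟩

lemma reachVE_trans {G : SimpleGraph V} {A : Set V} {E : Set (Sym2 V)} {u v w : V}
    (h : ReachVE G A E u v) (h' : ReachVE G A E v w) : ReachVE G A E u w := by
  obtain ⟨h1, h2, hr⟩ := h
  obtain ⟨h3, h4, hr'⟩ := h'
  exact ⟨h1, h4, hr.trans hr'⟩

lemma walk_cross {W : Type*} {G' : SimpleGraph W} {P : W → Prop} :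
    ∀ {a b : W}, G'.Walk a b → P a → ¬ P b →
      ∃ x y, G'.Adj x y ∧ P x ∧ ¬ P y := by
  intro a b w
  induction w with
  | nil => intro h h'; exact absurd h h'
  | @cons x y z h p ih =>
      intro ha hb
      by_cases hc : P y
      · exact ih hc hb
      · exact ⟨x, y, h, ha, hc⟩

lemma reachOutside_of_walk {G : SimpleGraph V} {A : Set V} {E : Set (Sym2 V)}
    {T : Set V} {u : V} (hmem : ∀ z, ReachVE G A E u z → z ∉ T) :
    ∀ {a b : (Aᶜ : Set V)}, (DelVE G A E).Walk a b →
      ReachVE G A E u ↑a → ReachOutside G T ↑a ↑b := by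
  intro a b w
  induction w with
  | nil =>
      intro ha
      exact ⟨hmem _ ha, hmem _ ha, SimpleGraph.Reachable.refl _⟩
  | @cons x y z h p ih =>
      intro hx
      have hxy : ReachVE G A E (↑x) (↑y) := ⟨x.2, y.2, h.reachable⟩
      have hy : ReachVE G A E u ↑y := reachVE_trans hx hxy
      obtain ⟨hy1, hz1, hr⟩ := ih hy
      have hGadj : G.Adj ↑x ↑y := by
        have h' : (G.deleteEdges E).Adj ↑x ↑y := h
        exact h'.1
      have hadjT : (G.induce (Tᶜ : Set V)).Adj ⟨↑x, hmem _ hx⟩ ⟨↑y, hmem _ hy⟩ := hGadj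
      exact ⟨hmem _ hx, hz1, hadjT.reachable.trans hr⟩

/-- Lemma `l30`(2): if the component `H₂` of `G − M` contains a vertex that is
not an endpoint of an edge of `M`, then the boundary `T^M₂` is a cutset and
`H₁` is a connected component of `G − T^M₂`. -/
theorem stmt_12 [Fintype V] (G : SimpleGraph V)
    (htri : IsTriconnected G) (hbig : 6 < Fintype.card V)
    (A : Set V) (E : Set (Sym2 V))
    (hcard : A.ncard + E.ncard = 3) (hEsub : E ⊆ G.edgeSet)
    (hEne : E.Nonempty) (hcut : CutVE G A E)
    (H₁ H₂ : Set V) (hH₁ : IsCompVE G A E H₁) (hH₂ : IsCompVE G A E H₂)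
    (hHne : H₁ ≠ H₂) (hcover : ∀ v, v ∉ A → v ∈ H₁ ∪ H₂)
    (hnt₁ : ∀ v : V, H₁ ≠ {v}) (hnt₂ : ∀ v : V, H₂ ≠ {v})
    (hint : ∃ v ∈ H₂, ∀ e ∈ E, v ∉ e) :
    IsCutset G (A ∪ {v ∈ H₂ | ∃ e ∈ E, v ∈ e}) ∧
      IsCompOutside G (A ∪ {v ∈ H₂ | ∃ e ∈ E, v ∈ e}) H₁ := by
  obtain ⟨u, huA, hH1⟩ := hH₁
  obtain ⟨v, hvA, hH2⟩ := hH₂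
  set T₂ : Set V := A ∪ {v ∈ H₂ | ∃ e ∈ E, v ∈ e} with hT₂
  have huH1 : u ∈ H₁ := by rw [hH1]; exact reachVE_refl huA
  have hH1A : ∀ y ∈ H₁, y ∉ A := by
    intro y hy
    rw [hH1] at hy
    exact hy.2.1
  have hH2A : ∀ y ∈ H₂, y ∉ A := by
    intro y hy
    rw [hH2] at hy
    exact hy.2.1
  have hdisj : ∀ y, y ∈ H₁ → y ∈ H₂ → False := by
    intro y h1 h2
    apply hHne
    rw [hH1, hH2] at *
    ext z
    constructor
    · intro hz
      exact reachVE_trans (reachVE_trans h2 (reachVE_symm h1)) hz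
    · intro hz
      exact reachVE_trans (reachVE_trans h1 (reachVE_symm h2)) hz
  have hmem : ∀ z, ReachVE G A E u z → z ∉ T₂ := by
    intro z hz hzT
    have hz1 : z ∈ H₁ := by rw [hH1]; exact hz
    rcases hzT with hzA | ⟨hz2, _⟩
    · exact hH1A z hz1 hzA
    · exact hdisj z hz1 hz2
  have key : ∀ a b : V, G.Adj a b → a ∈ H₁ → b ∉ T₂ → b ∈ H₁ := by
    intro a b hab ha hbT
    have hbA : b ∉ A := fun h => hbT (Or.inl h)
    have hb12 : b ∈ H₁ ∪ H₂ := hcover b hbA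
    rcases hb12 with hb1 | hb2
    · exact hb1
    by_cases hE : s(a, b) ∈ E
    · exact absurd (Or.inr ⟨hb2, s(a, b), hE, Sym2.mem_mk_right a b⟩) hbT
    · have haA : a ∉ A := hH1A a ha
      have hadj : (DelVE G A E).Adj ⟨a, haA⟩ ⟨b, hbA⟩ :=
        SimpleGraph.deleteEdges_adj.mpr ⟨hab, hE⟩
      have hreach : ReachVE G A E a b := ⟨haA, hbA, hadj.reachable⟩
      rw [hH1] at ha ⊢
      exact reachVE_trans ha hreach
  obtain ⟨v₀, hv0H2, hv0E⟩ := hint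
  have hv0T : v₀ ∉ T₂ := by
    intro h
    rcases h with h | ⟨_, e, heE, hve⟩
    · exact hH2A v₀ hv0H2 h
    · exact hv0E e heE hve
  have huT : u ∉ T₂ := hmem u (reachVE_refl huA)
  have hv0H1 : v₀ ∉ H₁ := fun h => hdisj v₀ h hv0H2
  constructor
  · intro hcon
    obtain ⟨w⟩ := hcon.preconnected ⟨u, huT⟩ ⟨v₀, hv0T⟩
    obtain ⟨x, y, hadj, hx1, hy1⟩ :=
      walk_cross (P := fun z : (T₂ᶜ : Set V) => (z : V) ∈ H₁) w huH1 hv0H1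
    have hGadj : G.Adj ↑x ↑y := hadj
    exact hy1 (key ↑x ↑y hGadj hx1 y.2)
  · refine ⟨u, huT, ?_⟩
    ext y
    constructor
    · intro hy
      have hy' : ReachVE G A E u y := by rw [hH1] at hy; exact hy
      obtain ⟨h1, h2, ⟨w⟩⟩ := hy'
      exact reachOutside_of_walk hmem w (reachVE_refl huA)
    · intro hy
      obtain ⟨h1, h2, ⟨w⟩⟩ := hy
      by_contra hyH1
      obtain ⟨x, z, hadj, hx1, hz1⟩ :=
        walk_cross (P := fun z : (T₂ᶜ : Set V) => (z : V) ∈ H₁) w huH1 hyH1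
      have hGadj : G.Adj ↑x ↑z := hadj
      exact hz1 (key ↑x ↑z hGadj hx1 z.2)

end Paper
end
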